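/- Let a11 be invertible and σ = a22 - a21 * a11⁻¹ * a12 its Schur complement, and suppose additionally that int and ext index finite-dimensional spaces (automatic since they are finite types). Then the dimension of the kernel of S.mulVecLin equals the dimension of the kernel of σ.mulVecLin, and the dimension of the cokernel ((int ⊕ ext) → ℝ)/range(S.mulVecLin) equals the dimension of the cokernel (ext → ℝ)/range(σ.mulVecLin). -/

import Mathlib

/-!
Writing a vector of `int ⊕ ext` as `(u, v)`, the top block row of `S (u, v) = 0` can be solved
for `u = -a11⁻¹ a12 v`, and substituting into the bottom row leaves `σ v = 0`. Hence
`v ↦ (-a11⁻¹ a12 v, v)` maps `ker σ` isomorphically onto `ker S`. Both matrices are square, so by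
rank–nullity the dimension of each cokernel equals that of the corresponding kernel.
-/

open Matrix

namespace Matrix

section CommRing

variable {R m n : Type*} [CommRing R] [Fintype m] [Fintype n] [DecidableEq m]
  (A : Matrix m m R) (B : Matrix m n R) (C : Matrix n m R) (D : Matrix n n R)

theorem fromBlocks_mulVec_sumElim_eq_zero_iff (hA : IsUnit A.det) (u : m → R) (v : n → R) :
    fromBlocks A B C D *ᵥ Sum.elim u v = 0 ↔
      u = -(A⁻¹ * B) *ᵥ v ∧ (D - C * A⁻¹ * B) *ᵥ v = 0 := by
  have solve_top : A *ᵥ u + B *ᵥ v = 0 ↔ u = -(A⁻¹ * B) *ᵥ v := by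
    constructor
    · intro h
      calc u = A⁻¹ *ᵥ (A *ᵥ u) := by rw [mulVec_mulVec, nonsing_inv_mul _ hA, one_mulVec]
        _ = -(A⁻¹ * B) *ᵥ v := by
          rw [eq_neg_of_add_eq_zero_left h, mulVec_neg, mulVec_mulVec, neg_mulVec]
    · rintro rfl
      rw [neg_mulVec, mulVec_neg, mulVec_mulVec, ← Matrix.mul_assoc, mul_nonsing_inv _ hA,
        Matrix.one_mul, neg_add_cancel]
  rw [fromBlocks_mulVec, Sum.elim_comp_inl, Sum.elim_comp_inr, ← Sum.elim_zero_zero,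
    Sum.elim_eq_iff, solve_top]
  refine and_congr_right fun hu => ?_
  rw [hu, sub_mulVec, neg_mulVec, mulVec_neg, mulVec_mulVec, Matrix.mul_assoc, neg_add_eq_sub]

theorem ker_fromBlocks_mulVecLin [DecidableEq n] (hA : IsUnit A.det) :
    LinearMap.ker (fromBlocks A B C D).mulVecLin =
      (LinearMap.ker (D - C * A⁻¹ * B).mulVecLin).map (fromRows (-(A⁻¹ * B)) 1).mulVecLin := by
  ext x
  rw [← Sum.elim_comp_inl_inr x]
  simp only [LinearMap.mem_ker, mulVecLin_apply, Submodule.mem_map, fromRows_mulVec, one_mulVec,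
    Sum.elim_eq_iff, fromBlocks_mulVec_sumElim_eq_zero_iff A B C D hA]
  constructor
  · rintro ⟨hu, hv⟩
    exact ⟨_, hv, hu.symm, rfl⟩
  · rintro ⟨v, hv, hu, rfl⟩
    exact ⟨hu.symm, hv⟩

end CommRing

section Field

variable {K m n : Type*} [Field K] [Fintype m] [Fintype n] [DecidableEq m]

theorem finrank_ker_fromBlocks_mulVecLin (A : Matrix m m K) (B : Matrix m n K)
    (C : Matrix n m K) (D : Matrix n n K) (hA : IsUnit A.det) :
    Module.finrank K (LinearMap.ker (fromBlocks A B C D).mulVecLin) =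
      Module.finrank K (LinearMap.ker (D - C * A⁻¹ * B).mulVecLin) := by
  classical
  have embed_injective :
      Function.Injective (fromRows (-(A⁻¹ * B)) (1 : Matrix n n K)).mulVecLin := fun v w h => by
    simpa only [mulVecLin_apply, fromRows_mulVec, Sum.elim_comp_inr, one_mulVec] using
      congr_arg (· ∘ Sum.inr) h
  rw [ker_fromBlocks_mulVecLin A B C D hA]
  exact (Submodule.equivMapOfInjective _ embed_injective _).finrank_eq.symm

theorem finrank_quotient_range_mulVecLin_eq_finrank_ker (M : Matrix n n K) :
    Module.finrank K ((n → K) ⧸ LinearMap.range M.mulVecLin) =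
      Module.finrank K (LinearMap.ker M.mulVecLin) := by
  have := LinearMap.finrank_range_add_finrank_ker M.mulVecLin
  have := Submodule.finrank_quotient_add_finrank (LinearMap.range M.mulVecLin)
  omega

end Field

end Matrix

theorem schur_homology_dimensions_general
    {int ext : Type*} [Fintype int] [Fintype ext] [DecidableEq int]
    (a11 : Matrix int int ℝ) (a12 : Matrix int ext ℝ)
    (a21 : Matrix ext int ℝ) (a22 : Matrix ext ext ℝ)
    (h : IsUnit a11.det) :
    Module.finrank ℝ (LinearMap.ker (Matrix.fromBlocks a11 a12 a21 a22).mulVecLin) =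
      Module.finrank ℝ (LinearMap.ker (a22 - a21 * a11⁻¹ * a12).mulVecLin) ∧
    Module.finrank ℝ
        (((int ⊕ ext) → ℝ) ⧸ LinearMap.range (Matrix.fromBlocks a11 a12 a21 a22).mulVecLin) =
      Module.finrank ℝ
        ((ext → ℝ) ⧸ LinearMap.range (a22 - a21 * a11⁻¹ * a12).mulVecLin) := by
  have kernels := finrank_ker_fromBlocks_mulVecLin a11 a12 a21 a22 h
  refine ⟨kernels, ?_⟩
  rw [finrank_quotient_range_mulVecLin_eq_finrank_ker,
    finrank_quotient_range_mulVecLin_eq_finrank_ker, kernels]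

theorem schur_homology_dimensions
    {int ext : Type*} [Fintype int] [Fintype ext] [DecidableEq int] [DecidableEq ext]
    (a11 : Matrix int int ℝ) (a12 : Matrix int ext ℝ)
    (a21 : Matrix ext int ℝ) (a22 : Matrix ext ext ℝ)
    (h : IsUnit a11.det) :
    Module.finrank ℝ (LinearMap.ker (Matrix.fromBlocks a11 a12 a21 a22).mulVecLin) =
      Module.finrank ℝ (LinearMap.ker (a22 - a21 * a11⁻¹ * a12).mulVecLin) ∧
    Module.finrank ℝ
        (((int ⊕ ext) → ℝ) ⧸ LinearMap.range (Matrix.fromBlocks a11 a12 a21 a22).mulVecLin) =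
      Module.finrank ℝ
        ((ext → ℝ) ⧸ LinearMap.range (a22 - a21 * a11⁻¹ * a12).mulVecLin) :=
  schur_homology_dimensions_general a11 a12 a21 a22 h
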